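/- arXiv:1308.1590 — 2 statements merged into one kernel-verified Lean document; each statement's English description precedes it below -/
import Mathlib

section
/- Let A be an n×n real matrix, B ∈ ℝⁿ, Q a symmetric n×n real matrix, r > 0 and μ ≥ 0. Suppose P is a symmetric n×n real matrix with BᵀPB + r > 0 satisfying the Riccati equation P = AᵀPA − AᵀPB (BᵀPB + r)⁻¹ BᵀPA + Q, and set K = −(BᵀPB + r)⁻¹ BᵀPA (a 1×n matrix). Then for every x̃ ∈ ℝⁿ, writing x̃₊ = (A + BK)x̃, one has x̃₊ᵀPx̃₊ − x̃ᵀPx̃ + x̃ᵀQx̃ + μ|Kx̃| ≤ μ²/(4r). -/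
open Matrix

/-- **Per-step dissipation inequality.** If the symmetric matrix `P` solves the Riccati
equation with `BᵀPB + r > 0` and `K = −(BᵀPB + r)⁻¹BᵀPA`, then for every state `x̃ ∈ ℝⁿ`,
with `x̃₊ = (A + BK)x̃`, one has
`x̃₊ᵀPx̃₊ − x̃ᵀPx̃ + x̃ᵀQx̃ + μ|Kx̃| ≤ μ²/(4r)`. -/
theorem per_step_dissipation {n : ℕ}
    (A : Matrix (Fin n) (Fin n) ℝ) (B : Matrix (Fin n) (Fin 1) ℝ)
    (Q : Matrix (Fin n) (Fin n) ℝ) (hQ : Q.IsSymm)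
    (r : ℝ) (hr : 0 < r) (μ : ℝ) (hμ : 0 ≤ μ)
    (P : Matrix (Fin n) (Fin n) ℝ) (hP : P.IsSymm)
    (hs : 0 < (Bᵀ * P * B) 0 0 + r)
    (hric : P = Aᵀ * P * A
      - ((Bᵀ * P * B) 0 0 + r)⁻¹ • (Aᵀ * P * B * (Bᵀ * P * A)) + Q)
    (K : Matrix (Fin 1) (Fin n) ℝ)
    (hK : K = -(((Bᵀ * P * B) 0 0 + r)⁻¹ • (Bᵀ * P * A)))
    (x : Matrix (Fin n) (Fin 1) ℝ) :
    (((A + B * K) * x)ᵀ * P * ((A + B * K) * x)) 0 0 - (xᵀ * P * x) 0 0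
      + (xᵀ * Q * x) 0 0 + μ * |(K * x) 0 0| ≤ μ ^ 2 / (4 * r) := by
  obtain ⟨v, hv⟩ : ∃ v, v = Bᵀ * P * A := ⟨_, rfl⟩
  obtain ⟨b, hb⟩ : ∃ b : ℝ, b = (Bᵀ * P * B) 0 0 := ⟨_, rfl⟩
  obtain ⟨c, hc⟩ : ∃ c : ℝ, c = (b + r)⁻¹ := ⟨_, rfl⟩
  rw [← hb] at hs hric hK
  rw [← hv] at hric hK
  rw [← hc] at hric hK
  have hsne : b + r ≠ 0 := ne_of_gt hs
  have hvT : Aᵀ * P * B = vᵀ := by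
    rw [hv, Matrix.transpose_mul, Matrix.transpose_mul, Matrix.transpose_transpose,
      hP.eq, Matrix.mul_assoc]
  -- scalar middle lemma
  have hmid : vᵀ * (Bᵀ * P * B) * v = b • (vᵀ * v) := by
    ext i j
    simp only [Matrix.mul_apply, Matrix.smul_apply, Fin.sum_univ_one,
      Matrix.transpose_apply, smul_eq_mul, hb]
    ring
  -- Riccati rearranged
  have hAPA : Aᵀ * P * A = P + c • (vᵀ * v) - Q := by
    have h := hric
    rw [hvT] at h
    conv_lhs => rw [show Aᵀ * P * A
      = (Aᵀ * P * A - c • (vᵀ * v) + Q) + c • (vᵀ * v) - Q from by abel]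
    rw [← h]
  -- coefficient identity
  have hco : c * c * b = c - r * c ^ 2 := by
    rw [hc]
    field_simp
    ring
  -- key matrix identity
  have key : (A + B * K)ᵀ * P * (A + B * K) = P - Q - (r * c ^ 2) • (vᵀ * v) := by
    have hexp : (A + B * K)ᵀ * P * (A + B * K)
        = Aᵀ * P * A + Aᵀ * P * B * K + Kᵀ * (Bᵀ * P * A) + Kᵀ * (Bᵀ * P * B) * K := by
      rw [Matrix.transpose_add, Matrix.transpose_mul]
      simp only [Matrix.add_mul, Matrix.mul_add, Matrix.mul_assoc]
      abel
    rw [hexp, hAPA, hvT, ← hv, hK]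
    simp only [Matrix.transpose_neg, Matrix.transpose_smul, Matrix.neg_mul,
      Matrix.mul_neg, Matrix.smul_mul, Matrix.mul_smul, smul_smul, neg_neg, smul_neg]
    rw [hmid, smul_smul, hco, sub_smul]
    abel
  -- quadratic form rewriting
  have hq : ((A + B * K) * x)ᵀ * P * ((A + B * K) * x)
      = xᵀ * ((A + B * K)ᵀ * P * (A + B * K)) * x := by
    rw [Matrix.transpose_mul ((A + B * K)) x]
    simp only [Matrix.mul_assoc]
  -- square entry lemma
  have hsq : (xᵀ * (vᵀ * v) * x) 0 0 = ((v * x) 0 0) ^ 2 := by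
    have h1 : xᵀ * (vᵀ * v) * x = (v * x)ᵀ * (v * x) := by
      rw [Matrix.transpose_mul v x]
      simp only [Matrix.mul_assoc]
    rw [h1]
    simp only [Matrix.mul_apply, Matrix.transpose_apply, Fin.sum_univ_one, pow_two]
  obtain ⟨w, hw⟩ : ∃ w : ℝ, w = (v * x) 0 0 := ⟨_, rfl⟩
  rw [← hw] at hsq
  have hKx : (K * x) 0 0 = -(c * w) := by
    rw [hK]
    simp only [Matrix.neg_mul, Matrix.smul_mul, Matrix.neg_apply, Matrix.smul_apply,
      smul_eq_mul, ← hw]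
  have hmain : (((A + B * K) * x)ᵀ * P * ((A + B * K) * x)) 0 0
      = (xᵀ * P * x) 0 0 - (xᵀ * Q * x) 0 0 - r * c ^ 2 * w ^ 2 := by
    rw [hq, key]
    simp only [Matrix.sub_mul, Matrix.mul_sub, Matrix.smul_mul, Matrix.mul_smul,
      Matrix.sub_apply, Matrix.smul_apply, smul_eq_mul]
    rw [hsq]
  rw [hmain, hKx, abs_neg, abs_mul]
  have hcpos : 0 < c := by
    rw [hc]; exact inv_pos.mpr hs
  rw [abs_of_pos hcpos]
  have h4r : 0 < 4 * r := by linarith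
  rw [le_div_iff₀ h4r]
  have hcw : r ^ 2 * (c * |w|) ^ 2 = r ^ 2 * (c ^ 2 * w ^ 2) := by rw [mul_pow, sq_abs]
  nlinarith [sq_nonneg (μ - 2 * r * (c * |w|)), hcw]
end

section
/- Let A ∈ ℝ^{n×n}, B ∈ ℝⁿ with B ≠ 0, let P and Q be symmetric positive definite n×n real matrices, μ > 0 and N ≥ 1. Define the cost J(U,x) = x_NᵀPx_N + Σ_{i=0}^{N−1} x_iᵀQx_i + μΣ_{i=0}^{N−1}|u_i| (with x₀ = x, x_{i+1} = Ax_i + Bu_i) and the value function V(x) = inf_{U∈ℝ^N} J(U,x). Define G = Q̄^{1/2}Φ and H = −Q̄^{1/2}Υ as in the stacked formulation, G⁺ = (GᵀG)⁻¹Gᵀ, a₁ = μ√N·σ_max(G⁺H) and a₂ = σ_max²((GG⁺ − I)H), where σ_max(M) denotes the largest singular value of M. Then for every x ∈ ℝⁿ: λ_min(Q)‖x‖₂² ≤ V(x) ≤ a₁‖x‖₂ + (a₂ + λ_max(Q))‖x‖₂². -/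
open Matrix

/-- Predicted state sequence of the plant `x(i+1) = A x(i) + u(i) • B` started at `x`. -/
noncomputable def stateSeq {n : ℕ} (A : Matrix (Fin n) (Fin n) ℝ) (B : Fin n → ℝ)
    (x : Fin n → ℝ) (u : ℕ → ℝ) : ℕ → Fin n → ℝ
  | 0 => x
  | i + 1 => A.mulVec (stateSeq A B x u i) + u i • B

/-- The finite-horizon `ℓ¹/ℓ²` cost
`J(U,x) = x_NᵀPx_N + Σ_{i<N} x_iᵀQx_i + μ Σ_{i<N} |u_i|`,
where `x_0 = x` and `x_{i+1} = A x_i + B u_i`. -/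
noncomputable def costJ {n N : ℕ} (A : Matrix (Fin n) (Fin n) ℝ) (B : Fin n → ℝ)
    (P Q : Matrix (Fin n) (Fin n) ℝ) (μ : ℝ) (U : Fin N → ℝ) (x : Fin n → ℝ) : ℝ :=
  let u : ℕ → ℝ := fun i => if h : i < N then U ⟨i, h⟩ else 0
  stateSeq A B x u N ⬝ᵥ P.mulVec (stateSeq A B x u N)
    + ∑ i : Fin N, stateSeq A B x u i ⬝ᵥ Q.mulVec (stateSeq A B x u i)
    + μ * ∑ i : Fin N, |U i|

open Classical in
/-- The positive semidefinite square root of a positive semidefinite matrix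
(junk value `0` on matrices that are not positive semidefinite). -/
noncomputable def matSqrt {k : Type*} [Fintype k] [DecidableEq k]
    (M : Matrix k k ℝ) : Matrix k k ℝ :=
  if h : M.PosSemidef then
    h.1.eigenvectorUnitary.1 * diagonal ((RCLike.ofReal : ℝ → ℝ) ∘ (√·) ∘ h.1.eigenvalues) *
      (star h.1.eigenvectorUnitary : Matrix k k ℝ)
  else 0

/-- The block lower-triangular matrix `Φ ∈ ℝ^{Nn×N}` whose `(i,j)` block (0-indexed,
`j ≤ i`) is the column vector `A^{i−j}B ∈ ℝⁿ`. -/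
noncomputable def PhiMat {n : ℕ} (N : ℕ) (A : Matrix (Fin n) (Fin n) ℝ) (B : Fin n → ℝ) :
    Matrix (Fin N × Fin n) (Fin N) ℝ :=
  fun ip j =>
    if (j : ℕ) ≤ (ip.1 : ℕ) then ((A ^ ((ip.1 : ℕ) - (j : ℕ))).mulVec B) ip.2 else 0

/-- The matrix `Υ ∈ ℝ^{Nn×n}`, the vertical stack of `A, A², …, A^N`. -/
noncomputable def UpsMat {n : ℕ} (N : ℕ) (A : Matrix (Fin n) (Fin n) ℝ) :
    Matrix (Fin N × Fin n) (Fin n) ℝ :=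
  fun ip q => (A ^ ((ip.1 : ℕ) + 1)) ip.2 q

/-- The block diagonal weighting matrix `Q̄ = blockdiag(Q,…,Q,P)` (N−1 copies of `Q`
followed by one `P`). -/
noncomputable def QbarMat {n : ℕ} (N : ℕ) (P Q : Matrix (Fin n) (Fin n) ℝ) :
    Matrix (Fin N × Fin n) (Fin N × Fin n) ℝ :=
  fun ip jq =>
    if ip.1 = jq.1 then
      (if (ip.1 : ℕ) = N - 1 then P ip.2 jq.2 else Q ip.2 jq.2)
    else 0

/-- The largest singular value `σ_max(M) = √(λ_max(MᵀM))` of a matrix. -/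
noncomputable def sigmaMax {m p : Type*} [Fintype m] [Fintype p] [DecidableEq p]
    (M : Matrix m p ℝ) : ℝ :=
  Real.sqrt (⨆ i, (Matrix.posSemidef_conjTranspose_mul_self M).1.eigenvalues i)

/-!
Lower bound: all terms of `J` are nonnegative and the stage-`0` term is
`xᵀQx ≥ λ_min(Q)‖x‖²`. Upper bound: the predicted states `x_1, …, x_N` stack to `ΦU + Υx`, so
`J(U,x) = ‖GU − Hx‖² + xᵀQx + μ‖U‖₁`. At the least-squares input `U = G⁺Hx` the residual is
`(GG⁺ − I)Hx`, and `‖U‖₁ ≤ √N‖U‖₂ ≤ √N σ_max(G⁺H)‖x‖₂`.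
-/

namespace Matrix.IsHermitian
variable {k : Type*} [Fintype k] [DecidableEq k] {M : Matrix k k ℝ}
open scoped MatrixOrder

theorem iInf_eigenvalues_mul_dotProduct_self_le (hM : M.IsHermitian) (v : k → ℝ) :
    (⨅ i, hM.eigenvalues i) * (v ⬝ᵥ v) ≤ v ⬝ᵥ M *ᵥ v := by
  have hle : algebraMap ℝ _ (⨅ i, hM.eigenvalues i) ≤ M := by
    rw [algebraMap_le_iff_le_spectrum hM.isSelfAdjoint, hM.spectrum_real_eq_range_eigenvalues]
    rintro _ ⟨i, rfl⟩
    exact ciInf_le (Set.finite_range _).bddBelow i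
  simpa [Algebra.algebraMap_eq_smul_one, sub_mulVec, dotProduct_sub, smul_mulVec] using
    (Matrix.le_iff.mp hle).dotProduct_mulVec_nonneg v

theorem dotProduct_mulVec_le_iSup_eigenvalues_mul (hM : M.IsHermitian) (v : k → ℝ) :
    v ⬝ᵥ M *ᵥ v ≤ (⨆ i, hM.eigenvalues i) * (v ⬝ᵥ v) := by
  have hle : M ≤ algebraMap ℝ _ (⨆ i, hM.eigenvalues i) := by
    rw [le_algebraMap_iff_spectrum_le hM.isSelfAdjoint, hM.spectrum_real_eq_range_eigenvalues]
    rintro _ ⟨i, rfl⟩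
    exact le_ciSup (Set.finite_range _).bddAbove i
  simpa [Algebra.algebraMap_eq_smul_one, sub_mulVec, dotProduct_sub, smul_mulVec] using
    (Matrix.le_iff.mp hle).dotProduct_mulVec_nonneg v

end Matrix.IsHermitian

theorem sum_abs_le_sqrt_card_mul_sqrt_dotProduct_self {ι : Type*} [Fintype ι] (v : ι → ℝ) :
    ∑ i, |v i| ≤ √(Fintype.card ι) * √(v ⬝ᵥ v) := by
  have hCS := sq_sum_le_card_mul_sum_sq (s := Finset.univ) (f := fun i => |v i|)
  simp only [sq_abs, Finset.card_univ] at hCS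
  rw [← Real.sqrt_mul (Nat.cast_nonneg _)]
  exact (le_abs_self _).trans (Real.abs_le_sqrt (by simpa [dotProduct, sq] using hCS))

section sigmaMax
variable {m p : Type*} [Fintype m] [Fintype p] [DecidableEq p]

theorem sigmaMax_nonneg (M : Matrix m p ℝ) : 0 ≤ sigmaMax M := Real.sqrt_nonneg _

theorem sigmaMax_sq (M : Matrix m p ℝ) :
    sigmaMax M ^ 2 = ⨆ i, (posSemidef_conjTranspose_mul_self M).1.eigenvalues i :=
  Real.sq_sqrt <| Real.iSup_nonneg (posSemidef_conjTranspose_mul_self M).eigenvalues_nonneg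

theorem dotProduct_mulVec_self_le_sigmaMax_sq (M : Matrix m p ℝ) (v : p → ℝ) :
    (M *ᵥ v) ⬝ᵥ (M *ᵥ v) ≤ sigmaMax M ^ 2 * (v ⬝ᵥ v) := by
  have hgram : (M *ᵥ v) ⬝ᵥ (M *ᵥ v) = v ⬝ᵥ (Mᴴ * M) *ᵥ v := by
    rw [conjTranspose_eq_transpose_of_trivial, ← mulVec_mulVec, dotProduct_mulVec v Mᵀ,
      vecMul_transpose, dotProduct_comm]
  rw [hgram, sigmaMax_sq]
  exact (posSemidef_conjTranspose_mul_self M).1.dotProduct_mulVec_le_iSup_eigenvalues_mul v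

theorem sqrt_dotProduct_mulVec_self_le (M : Matrix m p ℝ) (v : p → ℝ) :
    √((M *ᵥ v) ⬝ᵥ (M *ᵥ v)) ≤ sigmaMax M * √(v ⬝ᵥ v) := by
  calc √((M *ᵥ v) ⬝ᵥ (M *ᵥ v)) ≤ √(sigmaMax M ^ 2 * (v ⬝ᵥ v)) :=
        Real.sqrt_le_sqrt (dotProduct_mulVec_self_le_sigmaMax_sq M v)
    _ = sigmaMax M * √(v ⬝ᵥ v) := by
        rw [Real.sqrt_mul (sq_nonneg _), Real.sqrt_sq (sigmaMax_nonneg M)]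

theorem sum_abs_mulVec_le (M : Matrix m p ℝ) (v : p → ℝ) :
    ∑ i, |(M *ᵥ v) i| ≤ √(Fintype.card m) * sigmaMax M * √(v ⬝ᵥ v) := by
  rw [mul_assoc]
  exact (sum_abs_le_sqrt_card_mul_sqrt_dotProduct_self _).trans
    (by gcongr; exact sqrt_dotProduct_mulVec_self_le M v)

end sigmaMax

section matSqrt
variable {k : Type*} [Fintype k] [DecidableEq k] {M : Matrix k k ℝ}

theorem matSqrt_eq_cfc (hM : M.PosSemidef) : matSqrt M = cfc Real.sqrt M := by
  rw [hM.1.cfc_eq, IsHermitian.cfc, Unitary.conjStarAlgAut_apply, matSqrt, dif_pos hM]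

theorem matSqrt_mul_self (hM : M.PosSemidef) : matSqrt M * matSqrt M = M := by
  have hspec : ∀ x ∈ spectrum ℝ M, 0 ≤ x := by
    rw [hM.1.spectrum_real_eq_range_eigenvalues]
    rintro _ ⟨i, rfl⟩
    exact hM.eigenvalues_nonneg i
  rw [matSqrt_eq_cfc hM, ← cfc_mul Real.sqrt Real.sqrt M]
  calc cfc (fun x => √x * √x) M = cfc id M := cfc_congr fun x hx => Real.mul_self_sqrt (hspec x hx)
    _ = M := cfc_id ℝ M hM.1.isSelfAdjoint

theorem transpose_matSqrt (hM : M.PosSemidef) : (matSqrt M)ᵀ = matSqrt M := by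
  rw [matSqrt_eq_cfc hM, ← conjTranspose_eq_transpose_of_trivial]
  exact cfc_predicate Real.sqrt M

theorem dotProduct_matSqrt_mulVec_self (hM : M.PosSemidef) (v : k → ℝ) :
    (matSqrt M *ᵥ v) ⬝ᵥ (matSqrt M *ᵥ v) = v ⬝ᵥ M *ᵥ v := by
  rw [dotProduct_mulVec, ← mulVec_transpose, transpose_matSqrt hM, mulVec_mulVec,
    matSqrt_mul_self hM, dotProduct_comm]

end matSqrt

section Qbar
variable {n N : ℕ} {P Q : Matrix (Fin n) (Fin n) ℝ}

theorem dotProduct_QbarMat_mulVec (v w : Fin N × Fin n → ℝ) :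
    v ⬝ᵥ QbarMat N P Q *ᵥ w = ∑ i : Fin N,
      (fun p => v (i, p)) ⬝ᵥ (if (i : ℕ) = N - 1 then P else Q) *ᵥ (fun p => w (i, p)) := by
  simp only [dotProduct, mulVec, QbarMat, Fintype.sum_prod_type, ite_mul, zero_mul]
  refine Finset.sum_congr rfl fun i _ => Finset.sum_congr rfl fun p _ => ?_
  rw [Finset.sum_comm]
  split_ifs <;> simp

theorem QbarMat_posSemidef (hP : P.PosSemidef) (hQ : Q.PosSemidef) :
    (QbarMat N P Q).PosSemidef := by
  refine .of_dotProduct_mulVec_nonneg ?_ fun v => ?_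
  · ext ⟨i, p⟩ ⟨j, q⟩
    simp only [conjTranspose_apply, QbarMat, star_trivial]
    split_ifs <;> subst_vars <;> first | rfl | exact hP.1.apply p q | exact hQ.1.apply p q | omega
  · rw [star_trivial, dotProduct_QbarMat_mulVec]
    refine Finset.sum_nonneg fun i _ => ?_
    split_ifs
    · simpa using hP.dotProduct_mulVec_nonneg (fun p => v (i, p))
    · simpa using hQ.dotProduct_mulVec_nonneg (fun p => v (i, p))

end Qbar

section dynamics
variable {n N : ℕ} (A : Matrix (Fin n) (Fin n) ℝ) (B : Fin n → ℝ) (x : Fin n → ℝ)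

theorem stateSeq_eq_sum (u : ℕ → ℝ) (k : ℕ) :
    stateSeq A B x u k = A ^ k *ᵥ x + ∑ j ∈ Finset.range k, u j • (A ^ (k - 1 - j) *ᵥ B) := by
  induction k with
  | zero => simp [stateSeq]
  | succ k ih =>
    simp only [stateSeq, ih, mulVec_add, mulVec_mulVec, ← pow_succ', mulVec_sum, mulVec_smul,
      Finset.sum_range_succ, Nat.add_sub_cancel, Nat.sub_self, pow_zero, one_mulVec]
    have hexp : ∀ j ∈ Finset.range k, k - 1 - j + 1 = k - j := fun j hj => by
      have := Finset.mem_range.mp hj; omega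
    rw [add_assoc, Finset.sum_congr rfl fun j hj => by rw [hexp j hj]]

def zeroExtend (U : Fin N → ℝ) : ℕ → ℝ := fun i => if h : i < N then U ⟨i, h⟩ else 0

noncomputable def stackedStates (U : Fin N → ℝ) : Fin N × Fin n → ℝ :=
  fun ip => stateSeq A B x (zeroExtend U) (ip.1 + 1) ip.2

theorem stackedStates_eq (U : Fin N → ℝ) :
    stackedStates A B x U = PhiMat N A B *ᵥ U + UpsMat N A *ᵥ x := by
  ext ⟨i, p⟩
  have hPhi : (PhiMat N A B *ᵥ U) (i, p)
      = ∑ j ∈ Finset.range (i + 1), zeroExtend U j * (A ^ (i - j) *ᵥ B) p := by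
    have hrange : (Finset.range N).filter (· ≤ (i : ℕ)) = Finset.range (i + 1) := by
      ext j; simp only [Finset.mem_filter, Finset.mem_range]; omega
    rw [← hrange, Finset.sum_filter, ← Fin.sum_univ_eq_sum_range]
    simp [mulVec, dotProduct, PhiMat, zeroExtend, mul_comm]
  rw [Pi.add_apply, hPhi, add_comm]
  simp only [stackedStates, stateSeq_eq_sum, Pi.add_apply, Finset.sum_apply, Pi.smul_apply,
    smul_eq_mul, Nat.add_sub_cancel]
  rfl

theorem costJ_eq_stackedStates (hN : 1 ≤ N) (P Q : Matrix (Fin n) (Fin n) ℝ) (μ : ℝ)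
    (U : Fin N → ℝ) :
    costJ A B P Q μ U x = stackedStates A B x U ⬝ᵥ QbarMat N P Q *ᵥ stackedStates A B x U
      + x ⬝ᵥ Q *ᵥ x + μ * ∑ i, |U i| := by
  obtain ⟨M, rfl⟩ : ∃ M, N = M + 1 := ⟨N - 1, by omega⟩
  set s := stateSeq A B x (zeroExtend U)
  have hcost : costJ A B P Q μ U x
      = s (M + 1) ⬝ᵥ P *ᵥ s (M + 1) + ∑ i : Fin (M + 1), s i ⬝ᵥ Q *ᵥ s i + μ * ∑ i, |U i| := rfl
  have hstage : ∑ i : Fin (M + 1), s i ⬝ᵥ Q *ᵥ s i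
      = x ⬝ᵥ Q *ᵥ x + ∑ i : Fin M, s (i + 1) ⬝ᵥ Q *ᵥ s (i + 1) :=
    Fin.sum_univ_succ _
  have hstacked : ∑ i : Fin (M + 1), (fun p => stackedStates A B x U (i, p)) ⬝ᵥ
        (if (i : ℕ) = M + 1 - 1 then P else Q) *ᵥ (fun p => stackedStates A B x U (i, p))
      = ∑ i : Fin M, s (i + 1) ⬝ᵥ Q *ᵥ s (i + 1) + s (M + 1) ⬝ᵥ P *ᵥ s (M + 1) := by
    simp only [Fin.sum_univ_castSucc, stackedStates, Fin.val_castSucc, Fin.val_last,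
      Nat.add_sub_cancel, if_pos, s]
    simp_rw [if_neg (Fin.is_lt _).ne]
  rw [hcost, dotProduct_QbarMat_mulVec, hstage, hstacked]
  ring

theorem dotProduct_mulVec_self_le_costJ (hN : 1 ≤ N) {P Q : Matrix (Fin n) (Fin n) ℝ}
    (hP : P.PosSemidef) (hQ : Q.PosSemidef) {μ : ℝ} (hμ : 0 ≤ μ) (U : Fin N → ℝ) :
    x ⬝ᵥ Q *ᵥ x ≤ costJ A B P Q μ U x := by
  have hstacked := (QbarMat_posSemidef (N := N) hP hQ).dotProduct_mulVec_nonneg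
    (stackedStates A B x U)
  have hinput : 0 ≤ μ * ∑ i, |U i| := mul_nonneg hμ (Finset.sum_nonneg fun i _ => abs_nonneg _)
  rw [star_trivial] at hstacked
  rw [costJ_eq_stackedStates A B x hN]
  linarith

theorem costJ_eq_residual (hN : 1 ≤ N) {P Q : Matrix (Fin n) (Fin n) ℝ} (hP : P.PosSemidef)
    (hQ : Q.PosSemidef) (μ : ℝ) (U : Fin N → ℝ) :
    let S := matSqrt (QbarMat N P Q)
    costJ A B P Q μ U x = ((S * PhiMat N A B) *ᵥ U + (S * UpsMat N A) *ᵥ x) ⬝ᵥ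
        ((S * PhiMat N A B) *ᵥ U + (S * UpsMat N A) *ᵥ x) + x ⬝ᵥ Q *ᵥ x + μ * ∑ i, |U i| := by
  intro S
  rw [costJ_eq_stackedStates A B x hN, ← mulVec_mulVec, ← mulVec_mulVec, ← mulVec_add,
    ← stackedStates_eq, dotProduct_matSqrt_mulVec_self (QbarMat_posSemidef hP hQ)]

end dynamics

theorem value_function_bounds_general {n N : ℕ} (hN : 1 ≤ N)
    (A : Matrix (Fin n) (Fin n) ℝ) (B : Fin n → ℝ)
    (P Q : Matrix (Fin n) (Fin n) ℝ) (hP : P.PosDef) (hQ : Q.PosDef)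
    (μ : ℝ) (hμ : 0 < μ) (x : Fin n → ℝ) :
    let G := matSqrt (QbarMat N P Q) * PhiMat N A B
    let H := -(matSqrt (QbarMat N P Q) * UpsMat N A)
    let Gp := (Gᵀ * G)⁻¹ * Gᵀ
    let a1 := μ * Real.sqrt N * sigmaMax (Gp * H)
    let a2 := (sigmaMax ((G * Gp - 1) * H)) ^ 2
    let V := ⨅ U : Fin N → ℝ, costJ A B P Q μ U x
    (⨅ j, hQ.1.eigenvalues j) * (x ⬝ᵥ x) ≤ V ∧
      V ≤ a1 * Real.sqrt (x ⬝ᵥ x) + (a2 + ⨆ j, hQ.1.eigenvalues j) * (x ⬝ᵥ x) := by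
  intro G H Gp a1 a2 V
  have hlow := dotProduct_mulVec_self_le_costJ A B x hN hP.posSemidef hQ.posSemidef hμ.le
  refine ⟨(hQ.1.iInf_eigenvalues_mul_dotProduct_self_le x).trans (le_ciInf hlow), ?_⟩
  have hresidual : G *ᵥ ((Gp * H) *ᵥ x) + (matSqrt (QbarMat N P Q) * UpsMat N A) *ᵥ x
      = ((G * Gp - 1) * H) *ᵥ x := by
    rw [Matrix.sub_mul, Matrix.one_mul, sub_mulVec, Matrix.mul_assoc G Gp H, ← mulVec_mulVec x G,
      neg_mulVec, sub_neg_eq_add]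
  have hinput : μ * ∑ i, |((Gp * H) *ᵥ x) i| ≤ a1 * √(x ⬝ᵥ x) := by
    have := mul_le_mul_of_nonneg_left (sum_abs_mulVec_le (Gp * H) x) hμ.le
    rwa [Fintype.card_fin, ← mul_assoc, ← mul_assoc] at this
  have hresidual_le := dotProduct_mulVec_self_le_sigmaMax_sq ((G * Gp - 1) * H) x
  have hstate_le := hQ.1.dotProduct_mulVec_le_iSup_eigenvalues_mul x
  calc V ≤ costJ A B P Q μ ((Gp * H) *ᵥ x) x := ciInf_le ⟨_, Set.forall_mem_range.2 hlow⟩ _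
    _ = (((G * Gp - 1) * H) *ᵥ x) ⬝ᵥ (((G * Gp - 1) * H) *ᵥ x) + x ⬝ᵥ Q *ᵥ x
          + μ * ∑ i, |((Gp * H) *ᵥ x) i| := by
      rw [costJ_eq_residual A B x hN hP.posSemidef hQ.posSemidef, hresidual]
    _ ≤ a1 * √(x ⬝ᵥ x) + (a2 + ⨆ j, hQ.1.eigenvalues j) * (x ⬝ᵥ x) := by
      linarith

/-- **Bounds on the value function.** For every `x ∈ ℝⁿ`,
`λ_min(Q)‖x‖₂² ≤ V(x) ≤ a₁‖x‖₂ + (a₂ + λ_max(Q))‖x‖₂²`, where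
`a₁ = μ√N σ_max(G⁺H)` and `a₂ = σ_max²((GG⁺ − I)H)`. -/
theorem value_function_bounds {n N : ℕ} (hN : 1 ≤ N)
    (A : Matrix (Fin n) (Fin n) ℝ) (B : Fin n → ℝ) (hB : B ≠ 0)
    (P Q : Matrix (Fin n) (Fin n) ℝ) (hP : P.PosDef) (hQ : Q.PosDef)
    (μ : ℝ) (hμ : 0 < μ) (x : Fin n → ℝ) :
    let G := matSqrt (QbarMat N P Q) * PhiMat N A B
    let H := -(matSqrt (QbarMat N P Q) * UpsMat N A)
    let Gp := (Gᵀ * G)⁻¹ * Gᵀ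
    let a1 := μ * Real.sqrt N * sigmaMax (Gp * H)
    let a2 := (sigmaMax ((G * Gp - 1) * H)) ^ 2
    let V := ⨅ U : Fin N → ℝ, costJ A B P Q μ U x
    (⨅ j, hQ.1.eigenvalues j) * (x ⬝ᵥ x) ≤ V ∧
      V ≤ a1 * Real.sqrt (x ⬝ᵥ x) + (a2 + ⨆ j, hQ.1.eigenvalues j) * (x ⬝ᵥ x) :=
  value_function_bounds_general hN A B P Q hP hQ μ hμ x
end
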